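/- arXiv:2006.04529 — 4 statements merged into one kernel-verified Lean document; each statement's English description precedes it below -/
import Mathlib

section
/- Let σ, τ : ℝ → ℝ³ satisfy ⟨σ', τ⟩ = 0, ⟨τ, τ⟩ = 1, ⟨τ', τ'⟩ = 1, and suppose (σ', τ, σ'') = 0 identically (so σ'' lies in span{τ, σ'} where σ' ≠ 0). Writing σ'' = σ₃ τ + σ₄ σ', and setting λ(s) := ⟨σ'(s), τ'(s)⟩, assume λ(s) ≠ 0 for all s and τ'' = -τ. Then σ₃ = -λ and σ₄ = λ'/λ. -/
/-!
Differentiating `⟨σ', τ⟩ = 0` gives `⟨σ'', τ⟩ = -λ`, and `⟨σ'', τ⟩ = σ₃` because `τ` is a unit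
vector orthogonal to `σ'`. Differentiating `λ = ⟨σ', τ'⟩` gives
`λ' = ⟨σ'', τ'⟩ + ⟨σ', τ''⟩ = σ₃ ⟨τ, τ'⟩ + σ₄ λ - ⟨σ', τ⟩ = σ₄ λ`, since `⟨τ, τ'⟩ = 0` for a unit
vector field; dividing by `λ ≠ 0` gives `σ₄`.
-/

open Matrix

section DotProduct

variable {ι 𝕜 : Type*} [Fintype ι] [NontriviallyNormedField 𝕜]

theorem HasDerivAt.dotProduct {f g : 𝕜 → ι → 𝕜} {f' g' : ι → 𝕜} {s : 𝕜}
    (hf : HasDerivAt f f' s) (hg : HasDerivAt g g' s) :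
    HasDerivAt (fun r => f r ⬝ᵥ g r) (f' ⬝ᵥ g s + f s ⬝ᵥ g') s := by
  have hsum : HasDerivAt (fun r => ∑ i, f r i * g r i) (∑ i, (f' i * g s i + f s i * g' i)) s :=
    HasDerivAt.fun_sum fun i _ => (hasDerivAt_pi.mp hf i).mul (hasDerivAt_pi.mp hg i)
  simp only [_root_.dotProduct, ← Finset.sum_add_distrib]
  exact hsum

theorem deriv_dotProduct {f g : 𝕜 → ι → 𝕜} {s : 𝕜}
    (hf : DifferentiableAt 𝕜 f s) (hg : DifferentiableAt 𝕜 g s) :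
    deriv (fun r => f r ⬝ᵥ g r) s = deriv f s ⬝ᵥ g s + f s ⬝ᵥ deriv g s :=
  (hf.hasDerivAt.dotProduct hg.hasDerivAt).deriv

theorem deriv_dotProduct_add_eq_zero_of_dotProduct_const {f g : 𝕜 → ι → 𝕜} {c : 𝕜} {s : 𝕜}
    (hf : DifferentiableAt 𝕜 f s) (hg : DifferentiableAt 𝕜 g s) (h : ∀ r, f r ⬝ᵥ g r = c) :
    deriv f s ⬝ᵥ g s + f s ⬝ᵥ deriv g s = 0 := by
  rw [← deriv_dotProduct hf hg, funext h, deriv_const]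

theorem deriv_dotProduct_self_eq_zero_of_dotProduct_self_const [CharZero 𝕜]
    {f : 𝕜 → ι → 𝕜} {c : 𝕜} {s : 𝕜}
    (hf : DifferentiableAt 𝕜 f s) (h : ∀ r, f r ⬝ᵥ f r = c) :
    deriv f s ⬝ᵥ f s = 0 := by
  have hsum := deriv_dotProduct_add_eq_zero_of_dotProduct_const hf hf h
  rw [dotProduct_comm (f s)] at hsum
  exact add_self_eq_zero.mp hsum

end DotProduct

theorem stmt_4_general (σ τ : ℝ → (Fin 3 → ℝ)) (σ₃ σ₄ : ℝ → ℝ)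
    (hσ : ContDiff ℝ 2 σ) (hτ : ContDiff ℝ 2 τ)
    (horth : ∀ s, deriv σ s ⬝ᵥ τ s = 0)
    (hunit : ∀ s, τ s ⬝ᵥ τ s = 1)
    (hdec : ∀ s, deriv (deriv σ) s = σ₃ s • τ s + σ₄ s • deriv σ s)
    (hlam : ∀ s, deriv σ s ⬝ᵥ deriv τ s ≠ 0)
    (hτ'' : ∀ s, deriv (deriv τ) s = -τ s) :
    (∀ s, σ₃ s = -(deriv σ s ⬝ᵥ deriv τ s)) ∧
    (∀ s, σ₄ s = deriv (fun r => deriv σ r ⬝ᵥ deriv τ r) s / (deriv σ s ⬝ᵥ deriv τ s)) := by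
  have hτ₁ := hτ.differentiable two_ne_zero
  have hσ₂ := hσ.differentiable_deriv_two
  have hτ₂ := hτ.differentiable_deriv_two
  have hσ₃ (s : ℝ) : σ₃ s = -(deriv σ s ⬝ᵥ deriv τ s) := by
    have h := deriv_dotProduct_add_eq_zero_of_dotProduct_const (hσ₂ s) (hτ₁ s) horth
    rw [hdec s, add_dotProduct, smul_dotProduct, smul_dotProduct, hunit s, horth s] at h
    simpa using eq_neg_of_add_eq_zero_left h
  refine ⟨hσ₃, fun s => ?_⟩
  have hττ' : τ s ⬝ᵥ deriv τ s = 0 := by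
    rw [dotProduct_comm]
    exact deriv_dotProduct_self_eq_zero_of_dotProduct_self_const (hτ₁ s) hunit
  have hderiv_lam :
      deriv (fun r => deriv σ r ⬝ᵥ deriv τ r) s = σ₄ s * (deriv σ s ⬝ᵥ deriv τ s) := by
    rw [deriv_dotProduct (hσ₂ s) (hτ₂ s), hdec s, hτ'' s, add_dotProduct, smul_dotProduct,
      smul_dotProduct, hττ', dotProduct_neg, horth s]
    simp
  rw [hderiv_lam, mul_div_cancel_right₀ _ (hlam s)]

theorem stmt_4 (σ τ : ℝ → (Fin 3 → ℝ)) (σ₃ σ₄ : ℝ → ℝ)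
    (hσ : ContDiff ℝ 2 σ) (hτ : ContDiff ℝ 2 τ)
    (horth : ∀ s, deriv σ s ⬝ᵥ τ s = 0)
    (hunit : ∀ s, τ s ⬝ᵥ τ s = 1)
    (hunit' : ∀ s, deriv τ s ⬝ᵥ deriv τ s = 1)
    (htriple : ∀ s, crossProduct (deriv σ s) (τ s) ⬝ᵥ deriv (deriv σ) s = 0)
    (hσ'ne : ∀ s, deriv σ s ≠ 0)
    (hdec : ∀ s, deriv (deriv σ) s = σ₃ s • τ s + σ₄ s • deriv σ s)
    (hlam : ∀ s, deriv σ s ⬝ᵥ deriv τ s ≠ 0)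
    (hτ'' : ∀ s, deriv (deriv τ) s = -τ s) :
    (∀ s, σ₃ s = -(deriv σ s ⬝ᵥ deriv τ s)) ∧
    (∀ s, σ₄ s = deriv (fun r => deriv σ r ⬝ᵥ deriv τ r) s / (deriv σ s ⬝ᵥ deriv τ s)) :=
  stmt_4_general σ τ σ₃ σ₄ hσ hτ horth hunit hdec hlam hτ''
end

section
/- Let λ ∈ ℝ with λ ≠ 0, let τ(s) = (cos s, sin s, 0), and let σ : ℝ → ℝ³ satisfy σ'' = -λ τ with ⟨σ', σ'⟩ constant. Then there exist constants c₂, c₄, c₅, c₆ such that σ(s) = (c₂ + λ cos s, c₄ + λ sin s, c₅ s + c₆). -/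
/-!
Integrating `σ'' = -λ τ` once gives `σ' = λ τ' + c` with `τ' = (-sin, cos, 0)` and a constant
vector `c`. Then `|σ'|² = λ² + |c|² + 2λ (c₁ cos s - c₀ sin s)`, so constant speed and `λ ≠ 0`
force `c₀ = c₁ = 0`; integrating once more gives the helix.
-/

open Matrix Real

noncomputable def planarCircle (s : ℝ) : Fin 3 → ℝ := ![cos s, sin s, 0]

noncomputable def planarCircleTangent (s : ℝ) : Fin 3 → ℝ := ![-sin s, cos s, 0]

theorem hasDerivAt_planarCircle (s : ℝ) :
    HasDerivAt planarCircle (planarCircleTangent s) s := by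
  refine hasDerivAt_pi.2 fun i => ?_
  fin_cases i
  · exact hasDerivAt_cos s
  · exact hasDerivAt_sin s
  · exact hasDerivAt_const s 0

theorem hasDerivAt_planarCircleTangent (s : ℝ) :
    HasDerivAt planarCircleTangent (-planarCircle s) s := by
  refine hasDerivAt_pi.2 fun i => ?_
  fin_cases i
  · exact (hasDerivAt_sin s).neg
  · exact hasDerivAt_cos s
  · exact (hasDerivAt_const s 0).congr_deriv (by simp [planarCircle])

theorem dotProduct_smul_planarCircleTangent_add_self (lam s : ℝ) (c : Fin 3 → ℝ) :
    (lam • planarCircleTangent s + c) ⬝ᵥ (lam • planarCircleTangent s + c) =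
      lam ^ 2 + c ⬝ᵥ c + (-2 * lam * c 0) * sin s + (2 * lam * c 1) * cos s := by
  simp only [dotProduct, Fin.sum_univ_three, planarCircleTangent, Pi.add_apply, Pi.smul_apply,
    smul_eq_mul, cons_val_zero, cons_val_one, cons_val]
  linear_combination lam ^ 2 * sin_sq_add_cos_sq s

theorem eq_zero_of_forall_mul_sin_add_mul_cos_eq {a b : ℝ}
    (h : ∀ s t : ℝ, a * sin s + b * cos s = a * sin t + b * cos t) : a = 0 ∧ b = 0 := by
  have ha := h (π / 2) (-(π / 2))
  have hb := h 0 π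
  simp only [sin_neg, cos_neg, sin_pi_div_two, cos_pi_div_two, sin_zero, cos_zero, sin_pi,
    cos_pi] at ha hb
  constructor <;> linarith

theorem eq_add_sub_of_forall_hasDerivAt {E : Type*} [NormedAddCommGroup E] [NormedSpace ℝ E]
    {f g f' : ℝ → E} (hf : ∀ s, HasDerivAt f (f' s) s) (hg : ∀ s, HasDerivAt g (f' s) s)
    (s : ℝ) : f s = g s + (f 0 - g 0) := by
  have h : ∀ x, HasDerivAt (f - g) 0 x := fun x => by
    simpa using (hf x).sub (hg x)
  have := is_const_of_deriv_eq_zero (fun x => (h x).differentiableAt) (fun x => (h x).deriv) s 0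
  rw [← Pi.sub_apply, ← this, Pi.sub_apply]
  abel

theorem stmt_5 (lam : ℝ) (hlam : lam ≠ 0) (σ : ℝ → (Fin 3 → ℝ))
    (hσ : ContDiff ℝ 2 σ)
    (hODE : ∀ s, deriv (deriv σ) s = (-lam) • ![Real.cos s, Real.sin s, 0])
    (hconst : ∀ s t : ℝ, deriv σ s ⬝ᵥ deriv σ s = deriv σ t ⬝ᵥ deriv σ t) :
    ∃ c₂ c₄ c₅ c₆ : ℝ, ∀ s,
      σ s = ![c₂ + lam * Real.cos s, c₄ + lam * Real.sin s, c₅ * s + c₆] := by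
  have hσ' : ∀ s, HasDerivAt σ (deriv σ s) s := fun s =>
    (hσ.differentiable two_ne_zero s).hasDerivAt
  have hσ'' : ∀ s, HasDerivAt (deriv σ) (-lam • planarCircle s) s := fun s => by
    rw [planarCircle, ← hODE]
    exact (hσ.differentiable_deriv_two s).hasDerivAt
  set c := deriv σ 0 - lam • planarCircleTangent 0
  have hvel : ∀ s, deriv σ s = lam • planarCircleTangent s + c :=
    eq_add_sub_of_forall_hasDerivAt hσ'' fun s => by
      simpa using (hasDerivAt_planarCircleTangent s).fun_const_smul lam
  have hc : c 0 = 0 ∧ c 1 = 0 := by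
    have hspeed : ∀ s t : ℝ, (-2 * lam * c 0) * sin s + (2 * lam * c 1) * cos s =
        (-2 * lam * c 0) * sin t + (2 * lam * c 1) * cos t := fun s t => by
      have := hconst s t
      rw [hvel, hvel, dotProduct_smul_planarCircleTangent_add_self,
        dotProduct_smul_planarCircleTangent_add_self] at this
      linarith
    simpa [hlam] using eq_zero_of_forall_mul_sin_add_mul_cos_eq hspeed
  set d := σ 0 - lam • planarCircle 0
  have hpath : ∀ s, HasDerivAt (fun s => lam • planarCircle s + s • c) (deriv σ s) s := fun s => by
    rw [hvel]
    exact ((hasDerivAt_planarCircle s).fun_const_smul lam).add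
      (((hasDerivAt_id' s).smul_const c).congr_deriv (one_smul ℝ c))
  have hpos : ∀ s, σ s = lam • planarCircle s + s • c + d := fun s =>
    (eq_add_sub_of_forall_hasDerivAt hσ' hpath s).trans (by simp [d])
  refine ⟨d 0, d 1, c 2, d 2, fun s => ?_⟩
  ext i
  rw [hpos s, Pi.add_apply, Pi.add_apply, Pi.smul_apply, Pi.smul_apply]
  fin_cases i <;> simp [planarCircle, hc] <;> ring
end

section
/- Let a, c be nonzero reals. If there exist constants λ₁, λ₃ ∈ ℝ such that −(3a(a+1)²/c²) u⁵ − ((a+1)(6b+a+2ab)/(bc)) u³ − ((3b+a+2ab)/(ab)) u = λ₁ u + λ₃ √(c + a u²) for all u in a nonempty open interval on which c + au² > 0 (where b is a nonzero real constant), then a = -1. -/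
theorem stmt_10 (a b c lam₁ lam₃ : ℝ) (ha : a ≠ 0) (hb : b ≠ 0) (hc : c ≠ 0)
    (u₀ u₁ : ℝ) (hlt : u₀ < u₁)
    (hpos : ∀ u ∈ Set.Ioo u₀ u₁, c + a * u ^ 2 > 0)
    (heq : ∀ u ∈ Set.Ioo u₀ u₁,
      -(3 * a * (a + 1) ^ 2 / c ^ 2) * u ^ 5
        - ((a + 1) * (6 * b + a + 2 * a * b) / (b * c)) * u ^ 3
        - ((3 * b + a + 2 * a * b) / (a * b)) * u
      = lam₁ * u + lam₃ * Real.sqrt (c + a * u ^ 2)) :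
    a = -1 := by
  by_contra hA1
  set A : ℝ := -(3 * a * (a + 1) ^ 2 / c ^ 2) with hAdef
  have hA : A ≠ 0 := by
    have h1 : a + 1 ≠ 0 := fun h => hA1 (by linarith)
    simp [hAdef, div_eq_zero_iff]
    refine ⟨⟨ha, h1⟩, hc⟩
  set B : ℝ := -((a + 1) * (6 * b + a + 2 * a * b) / (b * c))
  set D : ℝ := -((3 * b + a + 2 * a * b) / (a * b)) - lam₁
  set Q : Polynomial ℝ := Polynomial.C A * Polynomial.X ^ 5
      + Polynomial.C B * Polynomial.X ^ 3 + Polynomial.C D * Polynomial.X with hQdef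
  set S : Polynomial ℝ := Polynomial.C (lam₃ ^ 2 * c)
      + Polynomial.C (lam₃ ^ 2 * a) * Polynomial.X ^ 2 with hSdef
  have key : Q * Q = S := by
    apply Polynomial.eq_of_infinite_eval_eq
    apply Set.Infinite.mono (s := Set.Ioo u₀ u₁) _ (Set.Ioo_infinite hlt)
    intro u hu
    have h1 := heq u hu
    have h2 := hpos u hu
    have hsq : Real.sqrt (c + a * u ^ 2) ^ 2 = c + a * u ^ 2 :=
      Real.sq_sqrt h2.le
    have hQu : Q.eval u = lam₃ * Real.sqrt (c + a * u ^ 2) := by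
      simp only [hQdef, Polynomial.eval_add, Polynomial.eval_mul, Polynomial.eval_pow,
        Polynomial.eval_C, Polynomial.eval_X]
      have : A * u ^ 5 + B * u ^ 3 + D * u
          = (A * u ^ 5 + B * u ^ 3 + (D + lam₁) * u) - lam₁ * u := by ring
      rw [this]
      have hD : D + lam₁ = -((3 * b + a + 2 * a * b) / (a * b)) := by simp [D]
      rw [hD]
      have h1' : A * u ^ 5 + B * u ^ 3 + -((3 * b + a + 2 * a * b) / (a * b)) * u
          = lam₁ * u + lam₃ * Real.sqrt (c + a * u ^ 2) := by
        rw [← h1]; ring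
      rw [h1']; ring
    simp only [Set.mem_setOf_eq, Polynomial.eval_mul, hQu, hSdef, Polynomial.eval_add,
      Polynomial.eval_pow, Polynomial.eval_C, Polynomial.eval_X]
    nlinarith [hsq]
  have hdegQ : Q.natDegree = 5 := by
    simp only [hQdef]
    compute_degree!
  have hdeg10 : (Q * Q).natDegree = 10 := by
    have hQ0 : Q ≠ 0 := by
      intro h
      rw [h] at hdegQ
      simp at hdegQ
    rw [Polynomial.natDegree_mul hQ0 hQ0, hdegQ]
  have hdegS : S.natDegree ≤ 2 := by
    simp only [hSdef]
    compute_degree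
  rw [key] at hdeg10
  omega
end

section
/- Suppose a, b, c are nonzero reals, and consider P(u) = −(3b(b+1)²/c²) v⁵ − ((b+1)(b+6a+2ab)/(ac)) v³ − ((b+3a+2ab)/(ab)) v as a function of v. If there exist constants λ₂, λ₃ with P(v) = λ₂ v + λ₃ √(c + b v²) for all v in a nonempty open interval on which c + bv² > 0, then b = −1. -/
/-! Squaring `P(v) - λ₂ v = λ₃ √(c + b v²)` gives a polynomial identity on an interval, hence
everywhere; its right-hand side has degree at most 2, so the left-hand side has degree at most 1
and the `v⁵` coefficient `-3b(b+1)²/c²` must vanish. -/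

open Polynomial

theorem Polynomial.natDegree_le_of_eval_eq_mul_sqrt {p g : ℝ[X]} {s : Set ℝ} (hs : s.Infinite)
    {n : ℕ} (hg : g.natDegree ≤ 2 * n) (r : ℝ) (hnonneg : ∀ v ∈ s, 0 ≤ g.eval v)
    (h : ∀ v ∈ s, p.eval v = r * √(g.eval v)) :
    p.natDegree ≤ n := by
  have hsq : p ^ 2 = C (r ^ 2) * g := by
    refine eq_of_infinite_eval_eq _ _ (hs.mono fun v hv => ?_)
    simp only [Set.mem_ofPred_eq, eval_pow, eval_mul, eval_C, h v hv, mul_pow,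
      Real.sq_sqrt (hnonneg v hv)]
  have : 2 * p.natDegree ≤ 2 * n := by
    calc 2 * p.natDegree = (p ^ 2).natDegree := (natDegree_pow p 2).symm
      _ ≤ g.natDegree := hsq ▸ natDegree_C_mul_le _ _
      _ ≤ 2 * n := hg
  omega

theorem stmt_17_general (a b c lam₂ lam₃ : ℝ) (hb : b ≠ 0) (hc : c ≠ 0)
    (v₀ v₁ : ℝ) (hlt : v₀ < v₁)
    (hpos : ∀ v ∈ Set.Ioo v₀ v₁, c + b * v ^ 2 > 0)
    (heq : ∀ v ∈ Set.Ioo v₀ v₁,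
      -(3 * b * (b + 1) ^ 2 / c ^ 2) * v ^ 5
        - ((b + 1) * (b + 6 * a + 2 * a * b) / (a * c)) * v ^ 3
        - ((b + 3 * a + 2 * a * b) / (a * b)) * v
      = lam₂ * v + lam₃ * Real.sqrt (c + b * v ^ 2)) :
    b = -1 := by
  set A := -(3 * b * (b + 1) ^ 2 / c ^ 2)
  set p : ℝ[X] := C A * X ^ 5 - C ((b + 1) * (b + 6 * a + 2 * a * b) / (a * c)) * X ^ 3
    - C ((b + 3 * a + 2 * a * b) / (a * b) + lam₂) * X
  have hdeg : p.natDegree ≤ 1 := by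
    refine natDegree_le_of_eval_eq_mul_sqrt (g := C c + C b * X ^ 2) (Set.Ioo_infinite hlt)
      (by compute_degree) lam₃ (fun v hv => by simpa using (hpos v hv).le) fun v hv => ?_
    simp only [p, eval_sub, eval_add, eval_mul, eval_C, eval_pow, eval_X]
    linear_combination heq v hv
  have hA : A = 0 := by
    have := coeff_eq_zero_of_natDegree_lt (p := p) (n := 5) (by omega)
    simpa [p, coeff_X, coeff_X_pow] using this
  have : 3 * b * (b + 1) ^ 2 = 0 := by simpa [A, hc] using hA
  simp only [mul_eq_zero, hb, pow_eq_zero_iff two_ne_zero] at this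
  linear_combination this.resolve_left (by norm_num)

theorem stmt_17 (a b c lam₂ lam₃ : ℝ) (ha : a ≠ 0) (hb : b ≠ 0) (hc : c ≠ 0)
    (v₀ v₁ : ℝ) (hlt : v₀ < v₁)
    (hpos : ∀ v ∈ Set.Ioo v₀ v₁, c + b * v ^ 2 > 0)
    (heq : ∀ v ∈ Set.Ioo v₀ v₁,
      -(3 * b * (b + 1) ^ 2 / c ^ 2) * v ^ 5
        - ((b + 1) * (b + 6 * a + 2 * a * b) / (a * c)) * v ^ 3
        - ((b + 3 * a + 2 * a * b) / (a * b)) * v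
      = lam₂ * v + lam₃ * Real.sqrt (c + b * v ^ 2)) :
    b = -1 :=
  stmt_17_general a b c lam₂ lam₃ hb hc v₀ v₁ hlt hpos heq
end
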